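/- Let X = C ∪ L ⊆ ℝ², where C = {(x,y) ∈ ℝ² : x ≤ −3|y|} and L = [0,∞) × {0}, equipped with the ℓ∞-distance d∞. Then (X, d∞) is a complete geodesic metric space: it is a complete metric space, and for any two points p, q ∈ X there exists a map γ : [0,1] → X with γ(0) = p, γ(1) = q, and d∞(γ(s),γ(t)) = |s−t|·d∞(p,q) for all s, t ∈ [0,1]. -/
import Mathlib


/- `(X, d∞)` is a complete geodesic metric space: `X = C ∪ L` is a complete subset of
`ℝ × ℝ` (which carries the ℓ∞-distance as its product metric), and any two points of `X`
are joined by a constant-speed geodesic in `X`. -/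

open Set

noncomputable section

/-- The cone `C = {(x,y) : x ≤ -3|y|}`. -/
def coneC : Set (ℝ × ℝ) := {p | p.1 ≤ -3 * |p.2|}

/-- The half-line `L = [0,∞) × {0}`. -/
def lineL : Set (ℝ × ℝ) := Set.Ici (0 : ℝ) ×ˢ ({0} : Set ℝ)

/-- The space `X = C ∪ L`. -/
def spaceX : Set (ℝ × ℝ) := coneC ∪ lineL

lemma coneC_convex : Convex ℝ coneC := by
  intro p hp q hq a b ha hb hab
  simp only [coneC, Set.mem_setOf_eq] at *
  have h1 : |a * p.2 + b * q.2| ≤ a * |p.2| + b * |q.2| := by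
    calc |a * p.2 + b * q.2| ≤ |a * p.2| + |b * q.2| := abs_add_le _ _
    _ = a * |p.2| + b * |q.2| := by
        rw [abs_mul, abs_mul, abs_of_nonneg ha, abs_of_nonneg hb]
  have e1 : (a • p + b • q).1 = a * p.1 + b * q.1 := rfl
  have e2 : (a • p + b • q).2 = a * p.2 + b * q.2 := rfl
  rw [e1, e2]
  nlinarith [hp, hq]

lemma convex_geod {S : Set (ℝ × ℝ)} (hS : Convex ℝ S) {p q : ℝ × ℝ} (hp : p ∈ S) (hq : q ∈ S) :
    ∃ γ : ℝ → ℝ × ℝ, (∀ t ∈ Set.Icc (0:ℝ) 1, γ t ∈ S) ∧ γ 0 = p ∧ γ 1 = q ∧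
      ∀ s ∈ Set.Icc (0:ℝ) 1, ∀ t ∈ Set.Icc (0:ℝ) 1, dist (γ s) (γ t) = |s - t| * dist p q := by
  refine ⟨fun t => AffineMap.lineMap p q t, ?_, by simp, by simp, fun s _ t _ => ?_⟩
  · intro t ht
    show AffineMap.lineMap p q t ∈ S
    rw [AffineMap.lineMap_apply_module]
    exact hS hp hq (by linarith [ht.1, ht.2]) ht.1 (by ring)
  · rw [dist_lineMap_lineMap, Real.dist_eq]


lemma mixed_geod (a b c : ℝ) (ha : a ≤ -3 * |b|) (ha0 : a < 0) (hc : 0 ≤ c) :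
    ∃ γ : ℝ → ℝ × ℝ, (∀ t ∈ Set.Icc (0:ℝ) 1, γ t ∈ spaceX) ∧ γ 0 = (a, b) ∧ γ 1 = (c, 0) ∧
      ∀ s ∈ Set.Icc (0:ℝ) 1, ∀ t ∈ Set.Icc (0:ℝ) 1,
        dist (γ s) (γ t) = |s - t| * dist ((a,b) : ℝ × ℝ) ((c,0) : ℝ × ℝ) := by
  have hb : |b| ≤ -a / 3 := by linarith
  have hb0 : 0 ≤ |b| := abs_nonneg b
  set d := c - a with hd
  have hd0 : 0 < d := by linarith
  have hdist : dist ((a,b) : ℝ × ℝ) ((c,0) : ℝ × ℝ) = d := by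
    have e : dist ((a,b) : ℝ × ℝ) ((c,0) : ℝ × ℝ) = max |a - c| |b - 0| := by
      rw [Prod.dist_eq]; simp only [Real.dist_eq]
    rw [e, sub_zero, abs_of_nonpos (by linarith : a - c ≤ 0)]
    rw [max_eq_left (by linarith : |b| ≤ -(a - c)), hd]; ring
  -- key algebraic fact
  have key : ∀ t : ℝ, a * (1 + t * d / a) = a + t * d := by
    intro t
    have hane : a ≠ 0 := ne_of_lt ha0
    field_simp
  refine ⟨fun t => (a + t * d, b * max (1 + t * d / a) 0), ?_, ?_, ?_, ?_⟩
  · -- membership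
    intro t ht
    by_cases h : a + t * d ≤ 0
    · left
      show a + t * d ≤ -3 * |b * max (1 + t * d / a) 0|
      have hm : 0 ≤ max (1 + t * d / a) 0 := le_max_right _ _
      have hmm : 1 + t * d / a ≥ 0 := by
        by_contra hneg
        push_neg at hneg
        have : a * (1 + t * d / a) > 0 := mul_pos_of_neg_of_neg ha0 hneg
        rw [key t] at this; linarith
      rw [max_eq_left hmm, abs_mul, abs_of_nonneg hmm]
      nlinarith [key t]
    · right
      push_neg at h
      refine ⟨le_of_lt h, ?_⟩
      show b * max (1 + t * d / a) 0 ∈ ({0} : Set ℝ)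
      have hmm : 1 + t * d / a ≤ 0 := by
        by_contra hneg
        push_neg at hneg
        have : a * (1 + t * d / a) < 0 := mul_neg_of_neg_of_pos ha0 hneg
        rw [key t] at this; linarith
      simp [max_eq_right hmm]
  · simp
  · have h1 : 1 + 1 * d / a ≤ 0 := by
      have : a * (1 + 1 * d / a) = a + 1 * d := key 1
      nlinarith
    show (a + 1 * d, b * max (1 + 1 * d / a) 0) = (c, 0)
    rw [max_eq_right h1, mul_zero]
    have : a + 1 * d = c := by simp [hd]
    rw [this]
  · intro s hs t ht
    rw [Prod.dist_eq, hdist]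
    simp only [Real.dist_eq]
    have hx : |a + s * d - (a + t * d)| = |s - t| * d := by
      rw [show a + s * d - (a + t * d) = (s - t) * d by ring, abs_mul, abs_of_pos hd0]
    have hy : |b * max (1 + s * d / a) 0 - b * max (1 + t * d / a) 0| ≤ |s - t| * d := by
      rw [show b * max (1 + s * d / a) 0 - b * max (1 + t * d / a) 0
          = b * (max (1 + s * d / a) 0 - max (1 + t * d / a) 0) by ring, abs_mul]
      have h1 : |max (1 + s * d / a) 0 - max (1 + t * d / a) 0| ≤ |1 + s * d / a - (1 + t * d / a)| :=
        abs_max_sub_max_le_abs _ _ _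
      have h2 : |1 + s * d / a - (1 + t * d / a)| = |s - t| * (d / (-a)) := by
        rw [show 1 + s * d / a - (1 + t * d / a) = (s - t) * (d / a) by ring, abs_mul,
          abs_div, abs_of_pos hd0, abs_of_neg ha0]
      calc |b| * |max (1 + s * d / a) 0 - max (1 + t * d / a) 0|
          ≤ |b| * (|s - t| * (d / (-a))) := by
            exact mul_le_mul_of_nonneg_left (h2 ▸ h1) hb0
        _ ≤ (-a) * (|s - t| * (d / (-a))) := by
            apply mul_le_mul_of_nonneg_right (by linarith)
            have hna : (0:ℝ) < -a := by linarith
            positivity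
        _ = |s - t| * (d / (-a) * (-a)) := by ring
        _ = |s - t| * d := by rw [div_mul_cancel₀ d (by linarith : (-a) ≠ (0:ℝ))]
    rw [hx, max_eq_left (hx ▸ hy)]


lemma mem_cases {p : ℝ × ℝ} (hp : p ∈ spaceX) : (p.1 < 0 ∧ p ∈ coneC) ∨ p ∈ lineL := by
  rcases hp with h | h
  · rcases lt_or_ge p.1 0 with h0 | h0
    · exact Or.inl ⟨h0, h⟩
    · right
      have hc : p.1 ≤ -3 * |p.2| := h
      have hb : |p.2| ≤ 0 := by nlinarith [abs_nonneg p.2]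
      have hb0 : p.2 = 0 := abs_nonpos_iff.mp hb
      exact ⟨h0, hb0⟩
  · exact Or.inr h

lemma lineL_convex : Convex ℝ lineL := (convex_Ici 0).prod (convex_singleton 0)

theorem spaceX_complete_and_geodesic :
    IsComplete spaceX ∧
      ∀ p ∈ spaceX, ∀ q ∈ spaceX,
        ∃ γ : ℝ → ℝ × ℝ, (∀ t ∈ Set.Icc (0 : ℝ) 1, γ t ∈ spaceX) ∧
          γ 0 = p ∧ γ 1 = q ∧
          ∀ s ∈ Set.Icc (0 : ℝ) 1, ∀ t ∈ Set.Icc (0 : ℝ) 1,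
            dist (γ s) (γ t) = |s - t| * dist p q := by
  constructor
  · -- completeness
    have hC : IsClosed coneC :=
      isClosed_le continuous_fst (continuous_const.mul continuous_snd.abs)
    have hL : IsClosed lineL := isClosed_Ici.prod isClosed_singleton
    exact (hC.union hL).isComplete
  · intro p hp q hq
    rcases mem_cases hp with ⟨hp0, hpC⟩ | hpL
    · rcases mem_cases hq with ⟨hq0, hqC⟩ | hqL
      · -- both in cone: straight segment
        obtain ⟨γ, hmem, h0, h1, hdist⟩ := convex_geod coneC_convex hpC hqC
        exact ⟨γ, fun t ht => Or.inl (hmem t ht), h0, h1, hdist⟩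
      · -- p in cone, q on line
        obtain ⟨γ, hmem, h0, h1, hdist⟩ := mixed_geod p.1 p.2 q.1 hpC hp0 hqL.1
        have hq2 : q.2 = 0 := hqL.2
        refine ⟨γ, hmem, by simpa using h0, ?_, ?_⟩
        · rw [h1]; exact Prod.ext rfl hq2.symm
        · intro s hs t ht
          rw [hdist s hs t ht,
            show ((p.1, p.2) : ℝ × ℝ) = p from Prod.mk.eta,
            show ((q.1, (0:ℝ)) : ℝ × ℝ) = q from Prod.ext rfl hq2.symm]
    · rcases mem_cases hq with ⟨hq0, hqC⟩ | hqL
      · -- p on line, q in cone: reverse the mixed geodesic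
        obtain ⟨γ, hmem, h0, h1, hdist⟩ := mixed_geod q.1 q.2 p.1 hqC hq0 hpL.1
        have hp2 : p.2 = 0 := hpL.2
        refine ⟨fun t => γ (1 - t), fun t ht => hmem (1 - t)
          ⟨by linarith [ht.1, ht.2], by linarith [ht.1, ht.2]⟩, ?_, ?_, ?_⟩
        · show γ (1 - 0) = p
          rw [show (1:ℝ) - 0 = 1 by ring, h1]; exact Prod.ext rfl hp2.symm
        · show γ (1 - 1) = q
          rw [show (1:ℝ) - 1 = 0 by ring, h0]
        · intro s hs t ht
          have := hdist (1 - s) ⟨by linarith [hs.1, hs.2], by linarith [hs.1, hs.2]⟩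
            (1 - t) ⟨by linarith [ht.1, ht.2], by linarith [ht.1, ht.2]⟩
          rw [this, show (1:ℝ) - s - (1 - t) = t - s by ring, abs_sub_comm t s,
            show ((q.1, q.2) : ℝ × ℝ) = q from Prod.mk.eta,
            show ((p.1, (0:ℝ)) : ℝ × ℝ) = p from Prod.ext rfl hp2.symm, dist_comm q p]
      · -- both on line: straight segment
        obtain ⟨γ, hmem, h0, h1, hdist⟩ := convex_geod lineL_convex hpL hqL
        exact ⟨γ, fun t ht => Or.inr (hmem t ht), h0, h1, hdist⟩

end
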